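/- arXiv:0812.3962 — 2 statements merged into one kernel-verified Lean document; each statement's English description precedes it below -/
import Mathlib

section
/- The triple product identity for theta with characteristic (1,0) of level 2: ∏_{n ≥ 1}(1 − qⁿ)(1 + q^{n−1})(1 + qⁿ) = 2 ∑_{n ≥ 0} q^{n(n+1)/2} as formal power series in q. -/
/-!
Write the truncated product as `(q;q)_{N} · J_N(1)`, where
`J_N(z) = ∏_{n<N} (1 + q^{n+1} z)(z + q^n)`. Substituting `z ↦ qz` multiplies `J_N` by a simple
rational factor, which gives a two-term recurrence for the coefficients `b_k` of `J_N`; its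
solution is the finite Jacobi triple product `b_k = q^{T(k-N)} [2N, k]_q`, with `T(j) = j(j+1)/2`.
Hence `(q;q)_N b_k` is `q^{T(k-N)}` times a series congruent to `1` modulo `q^{min(k, 2N-k)+1}`,
and this precision suffices to see that its coefficient of `q^{N-1}` is `1` if `T(k-N) = N-1` and
`0` otherwise. Every triangular number `T(j)` is hit exactly twice, by `j` and by `-1-j`.
-/

open Finset PowerSeries

def triangle (n : ℕ) : ℕ := n * (n + 1) / 2

lemma triangle_succ (n : ℕ) : triangle (n + 1) = triangle n + (n + 1) := by
  have h : (n + 1) * (n + 1 + 1) = n * (n + 1) + 2 * (n + 1) := by ring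
  rw [triangle, triangle, h, Nat.add_mul_div_left _ _ two_pos]

lemma le_triangle (n : ℕ) : n ≤ triangle n := by
  cases n with
  | zero => exact le_rfl
  | succ n => rw [triangle_succ]; omega

/-- `T(k - N - 1)`, where `T(j) = j(j+1)/2` is extended to negative `j` by `T(-1-j) = T(j)`. -/
def jacobiExponent (N k : ℕ) : ℕ :=
  if k ≤ N then triangle (N - k) else triangle (k - N - 1)

lemma jacobiExponent_succ_add (N k : ℕ) :
    jacobiExponent N (k + 1) + N = jacobiExponent N k + k := by
  unfold jacobiExponent
  rcases lt_trichotomy k N with hk | rfl | hk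
  · have h := triangle_succ (N - (k + 1))
    rw [show N - (k + 1) + 1 = N - k by omega] at h
    rw [if_pos (show k + 1 ≤ N from hk), if_pos hk.le, h]; omega
  · simp [triangle]
  · have h := triangle_succ (k - N - 1)
    rw [show k - N - 1 + 1 = k + 1 - N - 1 by omega] at h
    rw [if_neg (by omega), if_neg (by omega), h]; omega

section

variable {R : Type*} [CommRing R]

def qPochhammer (q : R) (n : ℕ) : R := ∏ i ∈ range n, (1 - q ^ (i + 1))

lemma qPochhammer_succ (q : R) (n : ℕ) :
    qPochhammer q (n + 1) = qPochhammer q n * (1 - q ^ (n + 1)) :=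
  prod_range_succ _ _

lemma qPochhammer_mul_prod_Ico (q : R) {m n : ℕ} (h : m ≤ n) :
    qPochhammer q m * ∏ i ∈ Ico m n, (1 - q ^ (i + 1)) = qPochhammer q n :=
  prod_range_mul_prod_Ico _ h

end

namespace Polynomial

variable {R : Type*} [CommRing R]

/-- `z^N ∏_{n=1}^{N} (1 + q^n z)(1 + q^{n-1} z⁻¹)` as a polynomial in `z`. -/
noncomputable def finiteJacobiProduct (q : R) (N : ℕ) : R[X] :=
  ∏ n ∈ range N, (1 + C (q ^ (n + 1)) * X) * (X + C (q ^ n))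

lemma finiteJacobiProduct_comp_C_mul_X (q : R) (N : ℕ) :
    (X + C (q ^ N)) * (finiteJacobiProduct q (N + 1)).comp (C q * X) =
      C (q ^ N) * (1 + C (q ^ (N + 2)) * X) * finiteJacobiProduct q (N + 1) := by
  induction N with
  | zero => simp [finiteJacobiProduct]; ring
  | succ N ih =>
    rw [finiteJacobiProduct, prod_range_succ, ← finiteJacobiProduct]
    simp only [mul_comp, add_comp, one_comp, C_comp, X_comp] at ih ⊢
    simp only [map_pow] at ih ⊢
    linear_combination (X + C q ^ (N + 1)) * (1 + C q ^ (N + 3) * X) * C q * ih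

lemma finiteJacobiProduct_coeff_succ (q : R) (N k : ℕ) :
    q ^ N * (1 - q ^ (k + 1)) * (finiteJacobiProduct q (N + 1)).coeff (k + 1) =
      (q ^ k - q ^ (2 * N + 2)) * (finiteJacobiProduct q (N + 1)).coeff k := by
  have h := congrArg (coeff · (k + 1)) (finiteJacobiProduct_comp_C_mul_X q N)
  simp only [add_mul, coeff_add, coeff_X_mul, coeff_C_mul, comp_C_mul_X_coeff, mul_assoc,
    one_mul] at h
  linear_combination -h

lemma finiteJacobiProduct_coeff_zero (q : R) (N : ℕ) :
    (finiteJacobiProduct q (N + 1)).coeff 0 = q ^ triangle N := by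
  rw [coeff_zero_eq_eval_zero, finiteJacobiProduct, eval_prod]
  simp only [eval_mul, eval_add, eval_one, eval_C, eval_X, mul_zero, add_zero, one_mul, zero_add]
  rw [prod_pow_eq_pow_sum (range (N + 1)) (fun n => n) q, sum_range_id, Nat.add_sub_cancel,
    mul_comm, triangle]

lemma natDegree_finiteJacobiProduct_le (q : R) (N : ℕ) :
    (finiteJacobiProduct q N).natDegree ≤ 2 * N := by
  have h (n : ℕ) : ((1 + C (q ^ (n + 1)) * X) * (X + C (q ^ n))).natDegree ≤ 2 := by
    compute_degree
  refine (natDegree_prod_le _ _).trans ((sum_le_sum fun n _ => h n).trans ?_)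
  simp [mul_comm]

/-- The finite Jacobi triple product: the `k`-th coefficient is `q^{T(k-N-1)} [2N+2, k]_q`. -/
theorem finiteJacobiProduct_coeff_mul_qPochhammer [IsDomain R] {q : R} (hq : q ≠ 0)
    {N k : ℕ} (hk : k ≤ 2 * N + 2) :
    (finiteJacobiProduct q (N + 1)).coeff k * qPochhammer q k * qPochhammer q (2 * N + 2 - k) =
      q ^ jacobiExponent N k * qPochhammer q (2 * N + 2) := by
  induction k with
  | zero =>
    simp [finiteJacobiProduct_coeff_zero, qPochhammer, jacobiExponent]
  | succ k ih =>
    set b := fun k => (finiteJacobiProduct q (N + 1)).coeff k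
    have hsplit : qPochhammer q (2 * N + 2 - k) =
        qPochhammer q (2 * N + 2 - (k + 1)) * (1 - q ^ (2 * N + 2 - k)) := by
      obtain ⟨m, hm⟩ : ∃ m, 2 * N + 2 - k = m + 1 := ⟨2 * N + 1 - k, by omega⟩
      rw [hm, show 2 * N + 2 - (k + 1) = m by omega, qPochhammer_succ]
    have hpow : q ^ k * (1 - q ^ (2 * N + 2 - k)) = q ^ k - q ^ (2 * N + 2) := by
      rw [mul_sub, mul_one, ← pow_add, Nat.add_sub_cancel' (by omega)]
    apply mul_left_cancel₀ (pow_ne_zero N hq)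
    calc q ^ N * (b (k + 1) * qPochhammer q (k + 1) * qPochhammer q (2 * N + 2 - (k + 1)))
        = q ^ N * (1 - q ^ (k + 1)) * b (k + 1) * qPochhammer q k *
            qPochhammer q (2 * N + 2 - (k + 1)) := by rw [qPochhammer_succ]; ring
      _ = q ^ k * (b k * qPochhammer q k * qPochhammer q (2 * N + 2 - k)) := by
        rw [finiteJacobiProduct_coeff_succ, ← hpow, hsplit]; ring
      _ = q ^ N * (q ^ jacobiExponent N (k + 1) * qPochhammer q (2 * N + 2)) := by
        rw [ih (by omega), ← mul_assoc, ← mul_assoc, ← pow_add, ← pow_add, add_comm N,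
          jacobiExponent_succ_add, add_comm]

lemma eval_one_finiteJacobiProduct (q : R) (N : ℕ) :
    (finiteJacobiProduct q (N + 1)).eval 1 =
      ∑ k ∈ range (2 * N + 3), (finiteJacobiProduct q (N + 1)).coeff k := by
  have hdeg := natDegree_finiteJacobiProduct_le q (N + 1)
  rw [eval_eq_sum_range' (n := 2 * N + 3) (by omega)]
  simp

lemma prod_eq_qPochhammer_mul_eval_one_finiteJacobiProduct (q : R) (N : ℕ) :
    ∏ n ∈ range N, ((1 - q ^ (n + 1)) * (1 + q ^ n) * (1 + q ^ (n + 1))) =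
      qPochhammer q N * (finiteJacobiProduct q N).eval 1 := by
  rw [qPochhammer, finiteJacobiProduct, eval_prod, ← prod_mul_distrib]
  refine prod_congr rfl fun n _ => ?_
  simp only [eval_mul, eval_add, eval_one, eval_C, eval_X, mul_one]
  ring

end Polynomial

lemma sum_range_jacobiExponent {M : Type*} [AddCommMonoid M] (f : ℕ → M) (N : ℕ) :
    ∑ k ∈ range (2 * N + 3), f (jacobiExponent N k) =
      ∑ n ∈ range (N + 1), f (triangle n) + ∑ n ∈ range (N + 2), f (triangle n) := by
  rw [show 2 * N + 3 = (N + 1) + (N + 2) by ring, sum_range_add, ← sum_range_reflect _ (N + 1)]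
  congr 1
  · refine sum_congr rfl fun k hk => ?_
    rw [mem_range] at hk
    rw [jacobiExponent, if_pos (by omega)]
    congr 2
    omega
  · refine sum_congr rfl fun n _ => ?_
    rw [jacobiExponent, if_neg (by omega)]
    congr 2
    omega

lemma dvd_mul_sub_one {R : Type*} [CommRing R] {a x y : R} (hx : a ∣ x - 1) (hy : a ∣ y - 1) :
    a ∣ x * y - 1 := by
  have h : x * y - 1 = x * (y - 1) + (x - 1) := by ring
  rw [h]
  exact dvd_add (dvd_mul_of_dvd_right hy x) hx

namespace PowerSeries

variable {R : Type*} [CommRing R]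

lemma isUnit_qPochhammer_X (n : ℕ) : IsUnit (qPochhammer (X : R⟦X⟧) n) := by
  rw [isUnit_iff_constantCoeff, qPochhammer, map_prod]
  simp

lemma X_pow_dvd_prod_Ico_one_sub_X_pow_sub_one (m n : ℕ) :
    (X : R⟦X⟧) ^ (m + 1) ∣ ∏ i ∈ Ico m n, (1 - X ^ (i + 1)) - 1 := by
  refine prod_induction _ (fun f => X ^ (m + 1) ∣ f - 1) (fun f g => dvd_mul_sub_one) (by simp)
    fun i hi => ?_
  rw [sub_sub_cancel_left, dvd_neg]
  exact pow_dvd_pow X (by rw [mem_Ico] at hi; omega)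

lemma coeff_X_pow_mul_of_X_pow_dvd_sub_one {W : R⟦X⟧} {c d m : ℕ}
    (hW : X ^ (m + 1) ∣ W - 1) (hd : d ≤ c + m) :
    coeff d (X ^ c * W) = coeff d (X ^ c) := by
  obtain ⟨V, hV⟩ := hW
  rw [show W = 1 + X ^ (m + 1) * V by rw [← hV]; ring, mul_add, mul_one, ← mul_assoc,
    ← pow_add, map_add, coeff_X_pow_mul', if_neg (show ¬c + (m + 1) ≤ d by omega), add_zero]

lemma exists_qPochhammer_mul_eq_X_pow_mul {f : R⟦X⟧} {a b c n : ℕ}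
    (h : f * qPochhammer X a * qPochhammer X b = X ^ c * qPochhammer X (a + b))
    (han : a ≤ n) (hab : a ≤ b) :
    ∃ W, qPochhammer X n * f = X ^ c * W ∧ X ^ (a + 1) ∣ W - 1 := by
  set U := ∏ i ∈ Ico b (a + b), (1 - (X : R⟦X⟧) ^ (i + 1))
  set V := ∏ i ∈ Ico a n, (1 - (X : R⟦X⟧) ^ (i + 1))
  have hfa : f * qPochhammer X a = X ^ c * U := by
    refine (isUnit_qPochhammer_X b).mul_left_cancel ?_
    rw [← qPochhammer_mul_prod_Ico X (show b ≤ a + b by omega)] at h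
    linear_combination h
  refine ⟨U * V, ?_, dvd_mul_sub_one ?_ (X_pow_dvd_prod_Ico_one_sub_X_pow_sub_one a n)⟩
  · rw [← qPochhammer_mul_prod_Ico X han]
    linear_combination V * hfa
  · exact (pow_dvd_pow X (by omega)).trans (X_pow_dvd_prod_Ico_one_sub_X_pow_sub_one b (a + b))

lemma coeff_qPochhammer_mul_coeff_finiteJacobiProduct [IsDomain R] {d k : ℕ}
    (hk : k ≤ 2 * d + 2) :
    coeff d (qPochhammer X (d + 1) * (Polynomial.finiteJacobiProduct X (d + 1)).coeff k) =
      coeff d (X ^ jacobiExponent d k : R⟦X⟧) := by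
  have h := Polynomial.finiteJacobiProduct_coeff_mul_qPochhammer (X_ne_zero (R := R)) hk
  rcases le_or_gt k d with hkd | hkd
  · obtain ⟨W, hW, hdvd⟩ := exists_qPochhammer_mul_eq_X_pow_mul (a := k) (b := 2 * d + 2 - k)
      (n := d + 1) (by rwa [Nat.add_sub_cancel' (by omega)]) (by omega) (by omega)
    have hT := le_triangle (d - k)
    rw [hW, coeff_X_pow_mul_of_X_pow_dvd_sub_one hdvd]
    rw [jacobiExponent, if_pos hkd]
    omega
  · rw [mul_right_comm] at h
    obtain ⟨W, hW, hdvd⟩ := exists_qPochhammer_mul_eq_X_pow_mul (a := 2 * d + 2 - k) (b := k)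
      (n := d + 1) (by rwa [Nat.sub_add_cancel hk]) (by omega) (by omega)
    have hT := le_triangle (k - d - 1)
    rw [hW, coeff_X_pow_mul_of_X_pow_dvd_sub_one hdvd]
    rw [jacobiExponent, if_neg (by omega)]
    omega

end PowerSeries

/-- The triple product identity
`∏_{n ≥ 1} (1 − qⁿ)(1 + q^{n−1})(1 + qⁿ) = 2 ∑_{n ≥ 0} q^{n(n+1)/2}`
as formal power series over `ℤ`, stated coefficient-wise: every coefficient of
degree `d` of the (suitably truncated, which does not affect degrees `≤ d`)
product equals the corresponding coefficient of the right-hand side. -/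
theorem triple_product_theta_char_one_zero (d : ℕ) :
    PowerSeries.coeff (R := ℤ) d
        (∏ n ∈ Finset.range (d + 1),
          ((1 - (PowerSeries.X : ℤ⟦X⟧) ^ (n + 1)) * (1 + (PowerSeries.X : ℤ⟦X⟧) ^ n) *
            (1 + (PowerSeries.X : ℤ⟦X⟧) ^ (n + 1)))) =
      PowerSeries.coeff (R := ℤ) d
        (2 * ∑ n ∈ Finset.range (d + 1), (PowerSeries.X : ℤ⟦X⟧) ^ (n * (n + 1) / 2)) := by
  have htop : coeff d (X ^ triangle (d + 1) : ℤ⟦X⟧) = 0 := by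
    rw [coeff_X_pow, if_neg (by rw [triangle_succ]; omega)]
  rw [Polynomial.prod_eq_qPochhammer_mul_eval_one_finiteJacobiProduct,
    Polynomial.eval_one_finiteJacobiProduct, mul_sum, map_sum,
    sum_congr rfl fun k hk => coeff_qPochhammer_mul_coeff_finiteJacobiProduct
      (by rw [mem_range] at hk; omega),
    sum_range_jacobiExponent (fun e => coeff d (X ^ e)), sum_range_succ _ (d + 1), htop,
    add_zero, two_mul, map_add, map_sum]
  simp only [triangle]
end

section
/- SL₂(Z) decomposes as the disjoint union over cusps f/e of Γ₀(N) and 0 ≤ a ≤ h_e − 1 of the cosets Γ₀(N)·M_{f/e}·(1 a; 0 1), where h_e = N/gcd(e², N) is the width of the cusp f/e and M_{f/e} ∈ SL₂(Z) has first column (f, e). -/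
open scoped MatrixGroups
open Matrix

open ModularGroup CongruenceSubgroup

/-!
Every coset `Γ₀(N) g` contains a matrix whose lower-left entry is `e = gcd(g₁₀, N)`: take the
bottom row `(C, D)` of an element of `Γ₀(N)` with `N ∣ C` and `C g₀₀ + D g₁₀ = e`, where `D` is
shifted along an arithmetic progression until it is prime to `N`, so that `gcd(C, D) = 1`.
Conversely, if `σ Tᵃ = δ σ' Tᵃ'` with `δ ∈ Γ₀(N)`, then `δ₁₀ ≡ 0 mod N` makes the lower-left
entries `e, e'` divide each other, and `δ₁₀ = e (d' - d + e (a' - a))` gives `d ≡ d'` modulo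
`gcd(e, N/e)`, hence `f ≡ f'` (as `f d ≡ f' d' ≡ 1 mod e`); for `σ = σ'` it gives
`N ∣ e² (a' - a)`, i.e. `a ≡ a'` modulo the width `N / gcd(e², N)`.
-/

lemma Int.exists_isCoprime_add_mul {a b : ℤ} (hab : IsCoprime a b) {n : ℕ} (hn : n ≠ 0) :
    ∃ k : ℤ, IsCoprime (a + k * b) n := by
  rcases eq_or_ne b 0 with rfl | hb
  · exact ⟨0, by simpa using hab.of_isCoprime_of_dvd_right (dvd_zero (n : ℤ))⟩
  set m := b.natAbs
  have : NeZero (m * n) := ⟨mul_ne_zero (Int.natAbs_ne_zero.mpr hb) hn⟩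
  have ha : IsUnit (a : ZMod m) := (ZMod.coe_int_isUnit_iff_isCoprime a m).mpr
    (hab.of_isCoprime_of_dvd_right (Int.natAbs_dvd.mpr dvd_rfl)).symm
  obtain ⟨u, hu⟩ := ZMod.unitsMap_surjective (dvd_mul_right m n) ha.unit
  set c : ℕ := (u : ZMod (m * n)).val
  have hc : ((c : ℤ) : ZMod m) = (a : ZMod m) := by
    rw [Int.cast_natCast, ZMod.natCast_val, ← ZMod.unitsMap_val (dvd_mul_right m n), hu,
      IsUnit.unit_spec]
  obtain ⟨k, hk⟩ : b ∣ a - c :=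
    Int.natAbs_dvd.mp ((ZMod.intCast_eq_intCast_iff_dvd_sub _ _ _).mp hc)
  refine ⟨-k, ?_⟩
  rw [show a + -k * b = c by linarith]
  exact Nat.isCoprime_iff_coprime.mpr (ZMod.val_coe_unit_coprime u).coprime_mul_left_right

lemma CongruenceSubgroup.exists_Gamma0_bottom_row {p q : ℤ} (hpq : IsCoprime p q) {N : ℕ}
    (hN : N ≠ 0) :
    ∃ C D : ℤ, (N : ℤ) ∣ C ∧ IsCoprime C D ∧ C * p + D * q = Int.gcd q N := by
  set e : ℤ := (Int.gcd q N : ℤ)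
  have he : e ≠ 0 :=
    Int.natCast_ne_zero.mpr (Int.gcd_pos_of_ne_zero_right q (Int.natCast_ne_zero.mpr hN)).ne'
  obtain ⟨q', hq⟩ : e ∣ q := Int.gcd_dvd_left q N
  obtain ⟨N', hN'⟩ : e ∣ N := Int.gcd_dvd_right q N
  have hq'N' : IsCoprime q' N' := by
    refine ⟨q.gcdA N, q.gcdB N, mul_left_cancel₀ he ?_⟩
    linear_combination -(q.gcdA N) * hq - (q.gcdB N) * hN' - Int.gcd_eq_gcd_ab q N
  have hNp : IsCoprime (N' * p) q' :=
    hq'N'.symm.mul_left (hpq.of_isCoprime_of_dvd_right ⟨e, by rw [hq]; ring⟩)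
  obtain ⟨c, D, hcD⟩ := hNp
  obtain ⟨t, ht⟩ := Int.exists_isCoprime_add_mul (⟨q', c, by linear_combination hcD⟩ :
    IsCoprime D (N' * p)) hN
  refine ⟨N * (c - t * q'), D + t * (N' * p), dvd_mul_right _ _,
    ht.symm.mul_left ⟨N' * p, q', by linear_combination hcD⟩, ?_⟩
  linear_combination e * hcD + (c - t * q') * p * hN' + (D + t * (N' * p)) * hq

lemma CongruenceSubgroup.exists_mem_Gamma0_mul_apply_one_zero_eq_gcd (g : SL(2, ℤ)) {N : ℕ}
    (hN : N ≠ 0) :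
    ∃ γ ∈ Gamma0 N, (γ * g) 1 0 = Int.gcd (g 1 0) N := by
  obtain ⟨C, D, hNC, hCD, hrow⟩ := exists_Gamma0_bottom_row (g.isCoprime_col 0) hN
  obtain ⟨γ, -, hγ⟩ := bottom_row_surj (R := ℤ) (show ![C, D] ∈ _ from hCD)
  have hγ0 : γ 1 0 = C := by simpa using congrFun hγ 0
  have hγ1 : γ 1 1 = D := by simpa using congrFun hγ 1
  refine ⟨γ, Gamma0_mem.mpr ?_, ?_⟩
  · rw [hγ0]; exact (ZMod.intCast_zmod_eq_zero_iff_dvd C N).mpr hNC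
  · simp [Matrix.SpecialLinearGroup.coe_mul, Matrix.mul_apply, Fin.sum_univ_two, hγ0, hγ1, hrow]

lemma ModularGroup.mul_T_zpow_apply_one_zero (g : SL(2, ℤ)) (n : ℤ) : (g * T ^ n) 1 0 = g 1 0 := by
  simp [Matrix.SpecialLinearGroup.coe_mul, coe_T_zpow, Matrix.mul_apply, Fin.sum_univ_two]

lemma ModularGroup.mul_T_zpow_apply_one_one (g : SL(2, ℤ)) (n : ℤ) :
    (g * T ^ n) 1 1 = g 1 0 * n + g 1 1 := by
  simp [Matrix.SpecialLinearGroup.coe_mul, coe_T_zpow, Matrix.mul_apply, Fin.sum_univ_two]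

lemma Matrix.SpecialLinearGroup.mul_inv_apply_one_zero {R : Type*} [CommRing R] (A B : SL(2, R)) :
    (A * B⁻¹) 1 0 = A 1 0 * B 1 1 - A 1 1 * B 1 0 := by
  simp [Matrix.SpecialLinearGroup.coe_mul, Matrix.SpecialLinearGroup.coe_inv, adjugate_fin_two,
    Matrix.mul_apply, Fin.sum_univ_two]
  ring

lemma CongruenceSubgroup.dvd_apply_one_zero_of_mem_Gamma0 {N : ℕ} {δ : SL(2, ℤ)}
    (hδ : δ ∈ Gamma0 N) : (N : ℤ) ∣ δ 1 0 :=
  (ZMod.intCast_zmod_eq_zero_iff_dvd _ N).mp (Gamma0_mem.mp hδ)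

lemma CongruenceSubgroup.dvd_mul_apply_one_zero_of_mem_Gamma0 {N : ℕ} {δ : SL(2, ℤ)}
    (hδ : δ ∈ Gamma0 N) {g : SL(2, ℤ)} {d : ℤ} (hdN : d ∣ N) (hdg : d ∣ g 1 0) :
    d ∣ (δ * g) 1 0 := by
  rw [Matrix.SpecialLinearGroup.coe_mul, Matrix.mul_apply, Fin.sum_univ_two]
  exact dvd_add ((hdN.trans (dvd_apply_one_zero_of_mem_Gamma0 hδ)).mul_right _) (hdg.mul_left _)

lemma ModularGroup.mul_T_zpow_mul_inv_apply_one_zero {σ σ' : SL(2, ℤ)} {e : ℤ} (he : σ 1 0 = e)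
    (he' : σ' 1 0 = e) (k k' : ℤ) :
    (σ * T ^ k * (σ' * T ^ k')⁻¹) 1 0 = e * (σ' 1 1 - σ 1 1 + e * (k' - k)) := by
  rw [Matrix.SpecialLinearGroup.mul_inv_apply_one_zero, mul_T_zpow_apply_one_zero,
    mul_T_zpow_apply_one_zero, mul_T_zpow_apply_one_one, mul_T_zpow_apply_one_one, he, he']
  ring

lemma apply_zero_zero_modEq_of_dvd {σ σ' : SL(2, ℤ)} {N e : ℕ} (he : σ 1 0 = e)
    (he' : σ' 1 0 = e) (heN : e ∣ N) (he0 : 0 < e) {k : ℤ}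
    (hN : (N : ℤ) ∣ e * (σ' 1 1 - σ 1 1 + e * k)) :
    σ 0 0 ≡ σ' 0 0 [ZMOD Nat.gcd e (N / e)] := by
  have hdiv : ((N / e : ℕ) : ℤ) ∣ σ' 1 1 - σ 1 1 + e * k := by
    refine (mul_dvd_mul_iff_left (Int.natCast_ne_zero.mpr he0.ne')).mp ?_
    rwa [← Nat.cast_mul, Nat.mul_div_cancel' heN]
  have hme : (Nat.gcd e (N / e) : ℤ) ∣ e := Int.natCast_dvd_natCast.mpr (Nat.gcd_dvd_left _ _)
  have hmd : (Nat.gcd e (N / e) : ℤ) ∣ σ' 1 1 - σ 1 1 := by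
    have := (Int.natCast_dvd_natCast.mpr (Nat.gcd_dvd_right e (N / e))).trans hdiv
    simpa using dvd_sub this (hme.mul_right k)
  have hdet := σ.det_coe
  have hdet' := σ'.det_coe
  rw [det_fin_two, he] at hdet
  rw [det_fin_two, he'] at hdet'
  refine Int.modEq_iff_dvd.mpr ?_
  have : σ' 0 0 - σ 0 0 =
      σ 0 0 * σ' 0 0 * -(σ' 1 1 - σ 1 1) + (σ 0 0 * σ' 0 1 - σ' 0 0 * σ 0 1) * e := by
    linear_combination σ 0 0 * hdet' - σ' 0 0 * hdet
  rw [this]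
  exact dvd_add (hmd.neg_right.mul_left _) (hme.mul_left _)

lemma Nat.eq_of_dvd_sq_mul_sub_of_lt_div_gcd {N e a a' : ℕ} (hN : 0 < N)
    (ha : a < N / Nat.gcd (e ^ 2) N) (ha' : a' < N / Nat.gcd (e ^ 2) N)
    (h : (N : ℤ) ∣ e ^ 2 * ((a' : ℤ) - a)) : a = a' := by
  have hmod : e ^ 2 * a ≡ e ^ 2 * a' [MOD N] :=
    Nat.modEq_iff_dvd.mpr (by push_cast; rwa [← mul_sub])
  have := hmod.cancel_left_div_gcd hN
  rw [Nat.gcd_comm] at this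
  exact this.eq_of_lt_of_lt ha ha'

/-- `SL₂(ℤ)` decomposes as the disjoint union, over the cusps `f/e` of `Γ₀(N)`
(`e ∣ N`, `gcd(e,f)=1`, `f mod gcd(e, N/e)`) and `0 ≤ a ≤ h_e − 1` with
`h_e = N/gcd(e², N)`, of the cosets `Γ₀(N)·M_{f/e}·(1 a; 0 1)`, where
`M_{f/e} ∈ SL₂(ℤ)` has first column `(f, e)`. -/
theorem SL2Z_coset_decomposition_Gamma0 (N : ℕ) (hN : 0 < N) :
    -- every element of `SL₂(ℤ)` lies in one of these cosets
    (∀ g : SL(2, ℤ),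
      ∃ γ ∈ CongruenceSubgroup.Gamma0 N, ∃ σ : SL(2, ℤ), ∃ e a : ℕ, ∃ f : ℤ,
        (σ 0 0 : ℤ) = f ∧ (σ 1 0 : ℤ) = e ∧ e ∣ N ∧ 0 < e ∧ IsCoprime f (e : ℤ) ∧
        a < N / Nat.gcd (e ^ 2) N ∧
        g = γ * σ * ModularGroup.T ^ a) ∧
    -- distinct parameters give distinct cosets
    (∀ (σ σ' : SL(2, ℤ)) (e a e' a' : ℕ) (f f' : ℤ),
      ((σ 0 0 : ℤ) = f ∧ (σ 1 0 : ℤ) = e ∧ e ∣ N ∧ 0 < e ∧ IsCoprime f (e : ℤ) ∧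
        a < N / Nat.gcd (e ^ 2) N) →
      ((σ' 0 0 : ℤ) = f' ∧ (σ' 1 0 : ℤ) = e' ∧ e' ∣ N ∧ 0 < e' ∧ IsCoprime f' (e' : ℤ) ∧
        a' < N / Nat.gcd (e' ^ 2) N) →
      (∃ δ ∈ CongruenceSubgroup.Gamma0 N,
        σ * ModularGroup.T ^ a = δ * (σ' * ModularGroup.T ^ a')) →
      e = e' ∧ f ≡ f' [ZMOD Nat.gcd e (N / e)] ∧ (σ = σ' → a = a')) := by
  constructor
  · intro g
    obtain ⟨γ, hγ, he⟩ := exists_mem_Gamma0_mul_apply_one_zero_eq_gcd g hN.ne'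
    refine ⟨γ⁻¹, inv_mem hγ, γ * g, Int.gcd (g 1 0) N, 0, (γ * g) 0 0, rfl, he, ?_,
      Int.gcd_pos_of_ne_zero_right _ (Int.natCast_ne_zero.mpr hN.ne'), ?_,
      Nat.div_gcd_pos_of_pos_right _ hN, by simp⟩
    · simpa using Int.gcd_dvd_natAbs_right (g 1 0) N
    · simpa [he] using (γ * g).isCoprime_col 0
  · rintro σ σ' e a e' a' f f' ⟨rfl, he, heN, he0, -, ha⟩ ⟨rfl, he', heN', -, -, ha'⟩ ⟨δ, hδ, hσ⟩
    simp only [← zpow_natCast] at hσ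
    have hee' : e = e' := by
      refine Nat.dvd_antisymm (Int.natCast_dvd_natCast.mp ?_) (Int.natCast_dvd_natCast.mp ?_)
      · have := dvd_mul_apply_one_zero_of_mem_Gamma0 (inv_mem hδ) (g := σ * T ^ (a : ℤ))
          (Int.natCast_dvd_natCast.mpr heN) (by rw [mul_T_zpow_apply_one_zero, he])
        rwa [hσ, inv_mul_cancel_left, mul_T_zpow_apply_one_zero, he'] at this
      · have := dvd_mul_apply_one_zero_of_mem_Gamma0 hδ (g := σ' * T ^ (a' : ℤ))
          (Int.natCast_dvd_natCast.mpr heN') (by rw [mul_T_zpow_apply_one_zero, he'])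
        rwa [← hσ, mul_T_zpow_apply_one_zero, he] at this
    subst hee'
    have hNδ : (N : ℤ) ∣ e * (σ' 1 1 - σ 1 1 + e * (a' - a)) := by
      rw [← mul_T_zpow_mul_inv_apply_one_zero he he', hσ, mul_inv_cancel_right]
      exact dvd_apply_one_zero_of_mem_Gamma0 hδ
    refine ⟨rfl, apply_zero_zero_modEq_of_dvd he he' heN he0 hNδ, ?_⟩
    rintro rfl
    exact Nat.eq_of_dvd_sq_mul_sub_of_lt_div_gcd hN ha ha' (by simpa [sq, mul_assoc] using hNδ)
end
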